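/- arXiv:2402.11465 — 8 statements merged into one kernel-verified Lean document; each statement's English description precedes it below -/
import Mathlib

section
/- Every nonempty connected P5-free graph G has a dominating set D such that the induced subgraph G[D] is either isomorphic to the path on three vertices P3 or is a clique. -/
/-!
Take an inclusion-minimal connected dominating set `D`. Minimality means that each `w ∈ D`
either has a private neighbour or separates `G[D]`; either way `w` has a neighbour `q` missing a
whole component of `G[D] - w`, and prefixing `q` to an induced path of `D` starting at `w`
lengthens it. Hence `G[D]` has no induced `P₄`, and the ends `a`, `c` of an induced `P₃`
`a - b - c` in `D` have adjacent private neighbours. If `D` is not a clique it contains such a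
`P₃`; a further vertex of `D` would then be adjacent to both `a` and `c`, so `b` could be dropped
from `D` without disconnecting it, and the neighbour of `b` promised by minimality closes an
induced `P₅` with the private neighbours. So `D` is that `P₃`.
-/

open SimpleGraph

/-- A graph is `P₅`-free if it contains no induced subgraph isomorphic to the
path on five vertices (i.e. no graph embedding of `pathGraph 5`). -/
def P5Free {V : Type*} (G : SimpleGraph V) : Prop :=
  IsEmpty (SimpleGraph.pathGraph 5 ↪g G)

namespace SimpleGraph

variable {V : Type*} {G : SimpleGraph V}

lemma P5Free.false_of_induced_path (hP5 : P5Free G) {v₀ v₁ v₂ v₃ v₄ : V}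
    (h01 : G.Adj v₀ v₁) (h12 : G.Adj v₁ v₂) (h23 : G.Adj v₂ v₃) (h34 : G.Adj v₃ v₄)
    (n02 : ¬G.Adj v₀ v₂) (n03 : ¬G.Adj v₀ v₃) (n04 : ¬G.Adj v₀ v₄)
    (n13 : ¬G.Adj v₁ v₃) (n14 : ¬G.Adj v₁ v₄) (n24 : ¬G.Adj v₂ v₄) : False := by
  let f : Fin 5 → V := ![v₀, v₁, v₂, v₃, v₄]
  have hf : ∀ i j, G.Adj (f i) (f j) ↔ (pathGraph 5).Adj i j := by
    intro i j
    fin_cases i <;> fin_cases j <;> simp [f, pathGraph_adj, G.adj_comm, *]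
  -- Distinct vertices of `P₅` have distinct neighbourhoods, so `f` cannot identify two of them.
  have htwinFree :
      ∀ i j : Fin 5, (∀ k, (pathGraph 5).Adj i k ↔ (pathGraph 5).Adj j k) → i = j := by
    simp only [pathGraph_adj]
    decide
  have hinj : f.Injective := fun i j hij => htwinFree i j fun k => by rw [← hf, ← hf, hij]
  exact hP5.false ⟨⟨f, hinj⟩, hf _ _⟩

lemma nonempty_induce_iso_pathGraph_three {a b c : V} (hab : G.Adj a b) (hbc : G.Adj b c)
    (hac : ¬G.Adj a c) (hne : a ≠ c) : Nonempty (G.induce {a, b, c} ≃g pathGraph 3) := by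
  let f : Fin 3 → V := ![a, b, c]
  have hf : ∀ i j, G.Adj (f i) (f j) ↔ (pathGraph 3).Adj i j := by
    intro i j
    fin_cases i <;> fin_cases j <;> simp [f, pathGraph_adj, G.adj_comm, *]
  have hinj : f.Injective := by
    intro i j hij
    fin_cases i <;> fin_cases j <;> simp_all [f, hab.ne, hbc.ne, hab.ne', hbc.ne', hne.symm]
  have hrange : Set.range f = {a, b, c} := by
    ext v
    simp only [f, Matrix.range_cons, Matrix.range_empty, Set.union_empty, Set.mem_union,
      Set.mem_singleton_iff, Set.mem_insert_iff]
  exact ⟨hrange ▸ (Embedding.isoInduceRange ⟨⟨f, hinj⟩, hf _ _⟩).symm⟩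

/-- Reachability in `G.induce s`, stated on `V`; every `x` reaches itself, even when `x ∉ s`. -/
def ReachableIn (G : SimpleGraph V) (s : Set V) : V → V → Prop :=
  Relation.ReflTransGen fun u v => u ∈ s ∧ v ∈ s ∧ G.Adj u v

namespace ReachableIn

variable {s : Set V} {x y : V}

lemma symm (h : G.ReachableIn s x y) : G.ReachableIn s y x := by
  induction h with
  | refl => exact .refl
  | tail _ hstep ih => exact .head ⟨hstep.2.1, hstep.1, hstep.2.2.symm⟩ ih

lemma mem (h : G.ReachableIn s x y) (hx : x ∈ s) : y ∈ s := by
  induction h with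
  | refl => exact hx
  | tail _ hstep _ => exact hstep.2.1

lemma exists_adj (h : G.ReachableIn s x y) (hne : x ≠ y) : ∃ z ∈ s, G.Adj x z := by
  rcases h.cases_head with rfl | ⟨z, ⟨-, hz, hxz⟩, -⟩
  exacts [absurd rfl hne, ⟨z, hz, hxz⟩]

lemma exists_induced_path_three (h : G.ReachableIn s x y) (hne : x ≠ y) (hnadj : ¬G.Adj x y) :
    ∃ a ∈ s, ∃ b ∈ s, ∃ c ∈ s, G.Adj a b ∧ G.Adj b c ∧ ¬G.Adj a c ∧ a ≠ c := by
  induction h using Relation.ReflTransGen.head_induction_on with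
  | refl => exact absurd rfl hne
  | @head x z hstep hrest ih =>
    obtain ⟨hx, hz, hxz⟩ := hstep
    by_cases hzy : G.Adj z y
    · exact ⟨x, hx, z, hz, y, ReachableIn.mem hrest hz, hxz, hzy, hnadj, hne⟩
    · exact ih (by rintro rfl; exact hnadj hxz) hzy

lemma exists_adj_of_mem_of_notMem {t : Set V} (h : G.ReachableIn s x y) (hx : x ∈ t)
    (hy : y ∉ t) : ∃ u ∈ s, u ∉ t ∧ ∃ v ∈ t, G.Adj u v := by
  induction h using Relation.ReflTransGen.head_induction_on with
  | refl => exact absurd hx hy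
  | @head x z hstep _ ih =>
    by_cases hz : z ∈ t
    · exact ih hz
    · exact ⟨z, hstep.2.1, hz, x, hx, hstep.2.2.symm⟩

lemma diff_singleton {w : V} (h : G.ReachableIn s x y) (hx : x ≠ w)
    (hnbr : ∀ d ∈ s, d ≠ w → G.Adj d w → G.ReachableIn (s \ {w}) d y) :
    G.ReachableIn (s \ {w}) x y := by
  induction h using Relation.ReflTransGen.head_induction_on with
  | refl => exact .refl
  | @head x z hstep _ ih =>
    obtain ⟨hx', hz, hxz⟩ := hstep
    by_cases hzw : z = w
    · exact hnbr x hx' hx (hzw ▸ hxz)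
    · exact .head ⟨⟨hx', hx⟩, ⟨hz, hzw⟩, hxz⟩ (ih hzw)

end ReachableIn

def IsConnectedDominating (G : SimpleGraph V) (D : Set V) : Prop :=
  (∀ v, v ∈ D ∨ ∃ d ∈ D, G.Adj v d) ∧ ∀ x ∈ D, ∀ y ∈ D, G.ReachableIn D x y

lemma Preconnected.isConnectedDominating_univ (h : G.Preconnected) :
    G.IsConnectedDominating Set.univ :=
  ⟨fun _ => .inl trivial, fun x _ y _ =>
    Relation.ReflTransGen.mono (fun _ _ huv => ⟨trivial, trivial, huv⟩) _ _
      ((reachable_iff_reflTransGen x y).1 (h x y))⟩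

def IsPrivateNeighbor (G : SimpleGraph V) (D : Set V) (w p : V) : Prop :=
  G.Adj p w ∧ ∀ u ∈ D, u ≠ w → ¬G.Adj p u

section Minimal

variable {D : Set V} (hD : Minimal G.IsConnectedDominating D)
include hD

lemma exists_isPrivateNeighbor_or_exists_not_reachableIn {w x : V} (hw : w ∈ D) (hx : x ∈ D)
    (hxw : x ≠ w) :
    (∃ p, G.IsPrivateNeighbor D w p) ∨
      ∃ d ∈ D, d ≠ w ∧ G.Adj d w ∧ ¬G.ReachableIn (D \ {w}) d x := by
  by_cases hcut : ∀ d ∈ D, d ≠ w → G.Adj d w → G.ReachableIn (D \ {w}) d x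
  · left
    have hreach : ∀ u ∈ D \ {w}, G.ReachableIn (D \ {w}) u x := fun u hu =>
      (hD.prop.2 u hu.1 x hx).diff_singleton hu.2 hcut
    have hnot : ¬G.IsConnectedDominating (D \ {w}) :=
      hD.not_prop_of_lt (Set.sdiff_singleton_ssubset.2 hw)
    obtain ⟨p, hpD, hp⟩ : ∃ p, p ∉ D \ {w} ∧ ∀ d ∈ D \ {w}, ¬G.Adj p d := by
      by_contra! h
      exact hnot ⟨fun v => or_iff_not_imp_left.2 (h v),
        fun u hu v hv => (hreach u hu).trans (hreach v hv).symm⟩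
    refine ⟨p, ?_, fun u hu huw => hp u ⟨hu, huw⟩⟩
    rcases hD.prop.1 p with hpD' | ⟨d, hd, hpd⟩
    · obtain rfl : p = w := by simpa [hpD'] using hpD
      obtain ⟨z, hz, hpz⟩ := (hD.prop.2 p hw x hx).exists_adj hxw.symm
      exact absurd hpz (hp z ⟨hz, hpz.ne'⟩)
    · obtain rfl : d = w := by_contra fun hdw => hp d ⟨hd, hdw⟩ hpd
      exact hpd
  · push Not at hcut
    exact .inr hcut

lemma exists_adj_forall_reachableIn_not_adj {w x : V} (hw : w ∈ D) (hx : x ∈ D) (hxw : x ≠ w) :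
    ∃ q, G.Adj q w ∧ ∀ u, G.ReachableIn (D \ {w}) x u → ¬G.Adj q u := by
  rcases exists_isPrivateNeighbor_or_exists_not_reachableIn hD hw hx hxw with
    ⟨p, hpw, hp⟩ | ⟨d, hdD, hdw, hdw', hd⟩
  · refine ⟨p, hpw, fun u hu => ?_⟩
    have hu' := hu.mem ⟨hx, hxw⟩
    exact hp u hu'.1 hu'.2
  · exact ⟨d, hdw', fun u hu hdu => hd (.head ⟨⟨hdD, hdw⟩, hu.mem ⟨hx, hxw⟩, hdu⟩ hu.symm)⟩

variable (hP5 : P5Free G)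
include hP5

lemma false_of_induced_path_four {w x y z : V} (hw : w ∈ D) (hx : x ∈ D) (hy : y ∈ D)
    (hz : z ∈ D) (hwx : G.Adj w x) (hxy : G.Adj x y) (hyz : G.Adj y z) (nwy : ¬G.Adj w y)
    (nwz : ¬G.Adj w z) (nxz : ¬G.Adj x z) : False := by
  obtain ⟨q, hqw, hq⟩ := exists_adj_forall_reachableIn_not_adj hD hw hx hwx.ne'
  have hx' : x ∈ D \ {w} := ⟨hx, hwx.ne'⟩
  have hy' : y ∈ D \ {w} := ⟨hy, by rintro rfl; exact nwz hyz⟩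
  have hz' : z ∈ D \ {w} := ⟨hz, by rintro rfl; exact nxz hwx.symm⟩
  have hxy' : G.ReachableIn (D \ {w}) x y := .single ⟨hx', hy', hxy⟩
  exact hP5.false_of_induced_path hqw hwx hxy hyz (hq x .refl) (hq y hxy')
    (hq z (hxy'.tail ⟨hy', hz', hyz⟩)) nwy nwz nxz

lemma exists_isPrivateNeighbor_of_induced_path_three {a b c : V} (ha : a ∈ D) (hb : b ∈ D)
    (hc : c ∈ D) (hab : G.Adj a b) (hbc : G.Adj b c) (hac : ¬G.Adj a c) (hne : a ≠ c) :
    ∃ p, G.IsPrivateNeighbor D a p := by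
  refine (exists_isPrivateNeighbor_or_exists_not_reachableIn hD ha hb hab.ne').resolve_right ?_
  rintro ⟨d, hd, hda, hdadj, hnreach⟩
  have hd' : d ∈ D \ {a} := ⟨hd, hda⟩
  have hb' : b ∈ D \ {a} := ⟨hb, hab.ne'⟩
  have hc' : c ∈ D \ {a} := ⟨hc, hne.symm⟩
  exact false_of_induced_path_four hD hP5 hd ha hb hc hdadj hab hbc
    (fun h => hnreach (.single ⟨hd', hb', h⟩))
    (fun h => hnreach (.head ⟨hd', hc', h⟩ (.single ⟨hc', hb', hbc.symm⟩))) hac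

lemma adj_and_adj_of_induced_path_three {a b c pa pc e : V} (ha : a ∈ D) (hb : b ∈ D)
    (hc : c ∈ D) (hab : G.Adj a b) (hbc : G.Adj b c) (hac : ¬G.Adj a c) (hne : a ≠ c)
    (hpa : G.IsPrivateNeighbor D a pa) (hpc : G.IsPrivateNeighbor D c pc) (hpapc : G.Adj pa pc)
    (he : e ∈ D) (hea : e ≠ a) (hec : e ≠ c) (hadj : G.Adj e a ∨ G.Adj e b ∨ G.Adj e c) :
    G.Adj e a ∧ G.Adj e c := by
  have npab := hpa.2 b hb hab.ne'
  have npac := hpa.2 c hc hne.symm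
  have npae := hpa.2 e he hea
  have npcb := hpc.2 b hb hbc.ne
  have npca := hpc.2 a ha hne
  have npce := hpc.2 e he hec
  by_cases hea' : G.Adj e a <;> by_cases hec' : G.Adj e c
  · exact ⟨hea', hec'⟩
  · exfalso
    by_cases heb : G.Adj e b
    · exact hP5.false_of_induced_path hpapc hpc.1 hbc.symm heb.symm npac npab npae npcb npce
        (mt Adj.symm hec')
    · exact false_of_induced_path_four hD hP5 he ha hb hc hea' hab hbc heb hec' hac
  · exfalso
    by_cases heb : G.Adj e b
    · exact hP5.false_of_induced_path hpapc.symm hpa.1 hab heb.symm npca npcb npce npab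
        npae (mt Adj.symm hea')
    · exact false_of_induced_path_four hD hP5 he hc hb ha hec' hbc.symm hab.symm heb hea'
        (mt Adj.symm hac)
  · have heb : G.Adj e b := (hadj.resolve_left hea').resolve_right hec'
    exact (hP5.false_of_induced_path heb hab.symm hpa.1.symm hpapc hea' (mt Adj.symm npae)
      (mt Adj.symm npce) (mt Adj.symm npab) (mt Adj.symm npcb) (mt Adj.symm npca)).elim

lemma eq_of_induced_path_three {a b c : V} (ha : a ∈ D) (hb : b ∈ D) (hc : c ∈ D)
    (hab : G.Adj a b) (hbc : G.Adj b c) (hac : ¬G.Adj a c) (hne : a ≠ c) : D = {a, b, c} := by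
  obtain ⟨pa, hpa⟩ :=
    exists_isPrivateNeighbor_of_induced_path_three hD hP5 ha hb hc hab hbc hac hne
  obtain ⟨pc, hpc⟩ := exists_isPrivateNeighbor_of_induced_path_three hD hP5 hc hb ha hbc.symm
    hab.symm (mt Adj.symm hac) hne.symm
  have npab := hpa.2 b hb hab.ne'
  have npac := hpa.2 c hc hne.symm
  have npcb := hpc.2 b hb hbc.ne
  have npca := hpc.2 a ha hne
  have hpapc : G.Adj pa pc := by_contra fun h => hP5.false_of_induced_path hpa.1 hab hbc
    hpc.1.symm npab npac h hac (mt Adj.symm npca) (mt Adj.symm npcb)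
  by_contra hD3
  have habc : {a, b, c} ⊆ D := by simp [Set.insert_subset_iff, ha, hb, hc]
  obtain ⟨e, he, he3⟩ := Set.exists_of_ssubset (habc.ssubset_of_ne (Ne.symm hD3))
  obtain ⟨d, hd, hd3, v, hv, hdv⟩ :=
    (hD.prop.2 a ha e he).exists_adj_of_mem_of_notMem (by simp) he3
  simp only [Set.mem_insert_iff, Set.mem_singleton_iff, not_or] at hd3 hv
  obtain ⟨hda, hdc⟩ := adj_and_adj_of_induced_path_three hD hP5 ha hb hc hab hbc hac hne hpa hpc
    hpapc hd hd3.1 hd3.2.2 (by rcases hv with rfl | rfl | rfl <;> simp [hdv])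
  -- `a - d - c` keeps `a` and `c` connected without `b`, so minimality of `D` at `b` yields a
  -- neighbour `q` of `b` seeing none of `a, d, c`; every choice of `q` closes an induced `P₅`.
  obtain ⟨q, hqb, hq⟩ := exists_adj_forall_reachableIn_not_adj hD hb ha hab.ne
  have ha' : a ∈ D \ {b} := ⟨ha, hab.ne⟩
  have hd' : d ∈ D \ {b} := ⟨hd, hd3.2.1⟩
  have hc' : c ∈ D \ {b} := ⟨hc, hbc.ne'⟩
  have had : G.ReachableIn (D \ {b}) a d := .single ⟨ha', hd', hda.symm⟩
  have nqa := hq a .refl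
  have nqd := hq d had
  have nqc := hq c (had.tail ⟨hd', hc', hdc⟩)
  by_cases hqpc : G.Adj q pc
  · exact hP5.false_of_induced_path hda.symm hdc hpc.1.symm hqpc.symm hac (mt Adj.symm npca)
      (mt Adj.symm nqa) (mt Adj.symm (hpc.2 d hd hd3.2.2)) (mt Adj.symm nqd) (mt Adj.symm nqc)
  by_cases hqpa : G.Adj q pa
  · exact hP5.false_of_induced_path hdc.symm hda hpa.1.symm hqpa.symm (mt Adj.symm hac)
      (mt Adj.symm npac) (mt Adj.symm nqc) (mt Adj.symm (hpa.2 d hd hd3.1)) (mt Adj.symm nqd)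
      (mt Adj.symm nqa)
  · exact hP5.false_of_induced_path hqb hbc hpc.1.symm hpapc.symm nqc hqpc hqpa
      (mt Adj.symm npcb) (mt Adj.symm npab) (mt Adj.symm npac)

end Minimal

end SimpleGraph

theorem dominating_P3_or_clique_in_P5_free_general
    {V : Type*} [Fintype V] (G : SimpleGraph V)
    (hconn : G.Connected) (hP5 : P5Free G) :
    ∃ D : Set V,
      (∀ v : V, v ∈ D ∨ ∃ d ∈ D, G.Adj v d) ∧
      (Nonempty (G.induce D ≃g SimpleGraph.pathGraph 3) ∨ G.IsClique D) := by
  obtain ⟨D, -, hD⟩ := exists_minimal_le_of_wellFoundedLT G.IsConnectedDominating _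
    hconn.preconnected.isConnectedDominating_univ
  refine ⟨D, hD.prop.1, ?_⟩
  by_cases hclique : G.IsClique D
  · exact .inr hclique
  obtain ⟨x, hx, y, hy, hxy, hnadj⟩ : ∃ x ∈ D, ∃ y ∈ D, x ≠ y ∧ ¬G.Adj x y := by
    simpa [IsClique, Set.Pairwise] using hclique
  obtain ⟨a, ha, b, hb, c, hc, hab, hbc, hac, hne⟩ :=
    (hD.prop.2 x hx y hy).exists_induced_path_three hxy hnadj
  rw [eq_of_induced_path_three hD hP5 ha hb hc hab hbc hac hne]
  exact .inl (nonempty_induce_iso_pathGraph_three hab hbc hac hne)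

theorem dominating_P3_or_clique_in_P5_free
    {V : Type*} [Fintype V] [Nonempty V] (G : SimpleGraph V)
    (hconn : G.Connected) (hP5 : P5Free G) :
    ∃ D : Set V,
      (∀ v : V, v ∈ D ∨ ∃ d ∈ D, G.Adj v d) ∧
      (Nonempty (G.induce D ≃g SimpleGraph.pathGraph 3) ∨ G.IsClique D) :=
  dominating_P3_or_clique_in_P5_free_general G hconn hP5
end

section
/- Every connected P5-free triangle-free graph G on at least 2 vertices (in particular, every connected P5-free bipartite graph on at least 2 vertices) has a dominating set D with 2 ≤ |D| ≤ 3 such that the induced subgraph G[D] is isomorphic to a path (on two or three vertices). -/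
/-!
Among the vertex sets of edges and induced `P₃`s, choose one, `D`, whose closed neighbourhood
`N[D]` is maximal under inclusion. If `D` does not dominate, connectivity gives a vertex
`w ∉ N[D]` with a neighbour `z ∈ N[D] \ D`, and `z` has a neighbour `q ∈ D`. The basic step: if
`w - z - q - x - t` is a walk with `w ∉ N[{q, x}]`, then `t ∈ N[{w, z, q}]`, since otherwise the
walk would be an induced `P₅`. Applied along `D`, it shows that for a suitable choice of `q`
(forced when `z` is adjacent to the centre of `D`, one of the two ends otherwise) the path
`w - z - q` dominates all of `N[D]` and also `w`, contradicting maximality.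
-/

open SimpleGraph

namespace SimpleGraph

variable {V : Type*} {G : SimpleGraph V}

theorem CliqueFree.not_adj_of_adj_of_adj (h : G.CliqueFree 3) {a b c : V} (hab : G.Adj a b)
    (hbc : G.Adj b c) : ¬G.Adj a c := by
  classical exact fun hac ↦ h {a, b, c} (is3Clique_triple_iff.2 ⟨hab, hac, hbc⟩)

/-- Repeated vertices need no separate treatment: they always produce one of the chords. -/
theorem P5Free.exists_chord (h : P5Free G) {a b c d e : V} (hab : G.Adj a b) (hbc : G.Adj b c)
    (hcd : G.Adj c d) (hde : G.Adj d e) :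
    G.Adj a c ∨ G.Adj a d ∨ G.Adj a e ∨ G.Adj b d ∨ G.Adj b e ∨ G.Adj c e := by
  by_contra! ⟨hac, had, hae, hbd, hbe, hce⟩
  have hinj : Function.Injective ![a, b, c, d, e] := by
    intro i j hij
    fin_cases i <;> fin_cases j <;> simp_all [G.adj_comm]
  refine (show IsEmpty (pathGraph 5 ↪g G) from h).false ⟨⟨_, hinj⟩, fun {i j} ↦ ?_⟩
  fin_cases i <;> fin_cases j <;> simp_all [pathGraph_adj, G.adj_comm]

theorem Connected.exists_adj_notMem_mem (hG : G.Connected) {S : Set V} {u : V} (hu : u ∈ S)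
    (hS : S ≠ Set.univ) : ∃ w z, G.Adj w z ∧ w ∉ S ∧ z ∈ S := by
  obtain ⟨v, hv⟩ := (Set.ne_univ_iff_exists_notMem S).1 hS
  obtain ⟨p⟩ := hG.preconnected u v
  obtain ⟨d, -, hd, hd'⟩ := p.exists_boundary_dart S hu hv
  exact ⟨d.snd, d.fst, d.adj.symm, hd', hd⟩

def closedNbhd (G : SimpleGraph V) (D : Set V) : Set V :=
  {v | v ∈ D ∨ ∃ d ∈ D, G.Adj v d}

theorem closedNbhd_union (D D' : Set V) :
    G.closedNbhd (D ∪ D') = G.closedNbhd D ∪ G.closedNbhd D' := by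
  ext v
  simp only [closedNbhd, Set.mem_union, Set.mem_ofPred_eq]
  grind

@[simp]
theorem mem_closedNbhd_insert {a v : V} {D : Set V} :
    v ∈ G.closedNbhd (insert a D) ↔ v = a ∨ G.Adj v a ∨ v ∈ G.closedNbhd D := by
  simp only [closedNbhd, Set.mem_ofPred_eq, Set.mem_insert_iff, exists_eq_or_imp]
  tauto

@[simp]
theorem mem_closedNbhd_singleton {a v : V} : v ∈ G.closedNbhd {a} ↔ v = a ∨ G.Adj v a := by
  simp [closedNbhd]

/-- Allowing `a = c` lets this also cover the edges `{a, b}`; in a triangle-free graph the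
remaining sets induce a `P₃`. -/
def IsShortPathSet (G : SimpleGraph V) (D : Set V) : Prop :=
  ∃ a b c, G.Adj a b ∧ G.Adj b c ∧ D = {a, b, c}

theorem CliqueFree.exists_pathGraph_embedding_range_eq (htri : G.CliqueFree 3) {a b c : V}
    (hab : G.Adj a b) (hbc : G.Adj b c) :
    ∃ n, 2 ≤ n ∧ n ≤ 3 ∧ ∃ f : pathGraph n ↪g G, Set.range f = {a, b, c} := by
  by_cases hac : a = c
  · subst hac
    refine ⟨2, le_rfl, by norm_num, ⟨⟨![a, b], fun i j hij ↦ ?_⟩, fun {i j} ↦ ?_⟩, ?_⟩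
    · fin_cases i <;> fin_cases j <;> simp_all [hab.ne, hab.ne.symm]
    · change G.Adj (![a, b] i) (![a, b] j) ↔ _
      fin_cases i <;> fin_cases j <;> simp [pathGraph_adj, hab, hab.symm]
    · change Set.range ![a, b] = _
      simp [Matrix.range_cons]
  · have hac' := htri.not_adj_of_adj_of_adj hab hbc
    refine ⟨3, by norm_num, le_rfl, ⟨⟨![a, b, c], fun i j hij ↦ ?_⟩, fun {i j} ↦ ?_⟩, ?_⟩
    · fin_cases i <;> fin_cases j <;> simp_all [hab.ne, hab.ne.symm, hbc.ne, hbc.ne.symm]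
    · change G.Adj (![a, b, c] i) (![a, b, c] j) ↔ _
      fin_cases i <;> fin_cases j <;> simp [pathGraph_adj, hab, hab.symm, hbc, hbc.symm, hac',
        G.adj_comm c a]
    · change Set.range ![a, b, c] = _
      ext
      simp [Matrix.range_cons, or_comm, or_left_comm]

theorem P5Free.mem_closedNbhd_of_adj (hP5 : P5Free G) (htri : G.CliqueFree 3) {w z q x t : V}
    (hwz : G.Adj w z) (hzq : G.Adj z q) (hqx : G.Adj q x) (hxt : G.Adj x t)
    (hw : w ∉ G.closedNbhd {q, x}) : t ∈ G.closedNbhd {w, z, q} := by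
  simp only [mem_closedNbhd_insert, mem_closedNbhd_singleton, G.adj_comm t] at hw ⊢
  have := hP5.exists_chord hwz hzq hqx hxt
  have := htri.not_adj_of_adj_of_adj hzq hqx
  tauto

theorem P5Free.closedNbhd_pair_subset (hP5 : P5Free G) (htri : G.CliqueFree 3) {w z q x : V}
    (hwz : G.Adj w z) (hzq : G.Adj z q) (hqx : G.Adj q x) (hw : w ∉ G.closedNbhd {q, x}) :
    G.closedNbhd {q, x} ⊆ G.closedNbhd {w, z, q} := by
  intro v hv
  have hvx : G.Adj v x → v ∈ G.closedNbhd {w, z, q} := fun h ↦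
    hP5.mem_closedNbhd_of_adj htri hwz hzq hqx h.symm hw
  simp only [mem_closedNbhd_insert, mem_closedNbhd_singleton] at hv hvx ⊢
  rcases hv with rfl | hv | rfl | hv
  exacts [by tauto, by tauto, by simp [hqx.symm], hvx hv]

theorem P5Free.closedNbhd_subset_of_adj_center (hP5 : P5Free G) (htri : G.CliqueFree 3)
    {w z p₁ p₂ p₃ : V} (h₁₂ : G.Adj p₁ p₂) (h₂₃ : G.Adj p₂ p₃) (hwz : G.Adj w z)
    (hz : G.Adj z p₂) (hw : w ∉ G.closedNbhd {p₁, p₂, p₃}) :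
    G.closedNbhd {p₁, p₂, p₃} ⊆ G.closedNbhd {w, z, p₂} := by
  have hD : ({p₁, p₂, p₃} : Set V) = {p₂, p₁} ∪ {p₂, p₃} := by ext; simp; tauto
  rw [hD, closedNbhd_union] at hw ⊢
  exact Set.union_subset
    (hP5.closedNbhd_pair_subset htri hwz hz h₁₂.symm fun h ↦ hw (Or.inl h))
    (hP5.closedNbhd_pair_subset htri hwz hz h₂₃ fun h ↦ hw (Or.inr h))

theorem P5Free.closedNbhd_subset_of_adj_ends (hP5 : P5Free G) (htri : G.CliqueFree 3)
    {w z p₁ p₂ p₃ : V} (h₂₃ : G.Adj p₂ p₃) (hwz : G.Adj w z) (hz₁ : G.Adj z p₁)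
    (hz₃ : G.Adj z p₃) (hw : w ∉ G.closedNbhd {p₁, p₂, p₃})
    (h₁ : ∀ t, G.Adj t p₁ → t ∈ G.closedNbhd {w, z, p₃}) :
    G.closedNbhd {p₁, p₂, p₃} ⊆ G.closedNbhd {w, z, p₃} := by
  have hD : ({p₁, p₂, p₃} : Set V) = {p₁} ∪ {p₃, p₂} := by ext; simp; tauto
  rw [hD, closedNbhd_union] at hw ⊢
  refine Set.union_subset (fun v hv ↦ ?_)
    (hP5.closedNbhd_pair_subset htri hwz hz₃ h₂₃.symm fun h ↦ hw (Or.inr h))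
  rcases mem_closedNbhd_singleton.1 hv with rfl | hv
  exacts [by simp [hz₁.symm], h₁ v hv]

/-- Otherwise neighbours `t` of `p₁` and `t'` of `p₃` violating both inclusions would induce a
`P₅`: `w - z - p₁ - t - t'` if `t ∼ t'`, and `t - p₁ - p₂ - p₃ - t'` if not. -/
theorem P5Free.adj_ends_dichotomy (hP5 : P5Free G) (htri : G.CliqueFree 3)
    {w z p₁ p₂ p₃ : V} (h₁₂ : G.Adj p₁ p₂) (h₂₃ : G.Adj p₂ p₃) (hwz : G.Adj w z)
    (hz₁ : G.Adj z p₁) (hw : w ∉ G.closedNbhd {p₁, p₂, p₃}) :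
    (∀ t, G.Adj t p₁ → t ∈ G.closedNbhd {w, z, p₃}) ∨
      ∀ t, G.Adj t p₃ → t ∈ G.closedNbhd {w, z, p₁} := by
  by_contra! ⟨⟨t, ht₁, ht⟩, ⟨t', ht'₃, ht'⟩⟩
  by_cases htt' : G.Adj t t'
  · refine ht' (hP5.mem_closedNbhd_of_adj htri hwz hz₁ ht₁.symm htt' ?_)
    simp only [mem_closedNbhd_insert, mem_closedNbhd_singleton] at hw ht ⊢
    tauto
  · simp only [mem_closedNbhd_insert, mem_closedNbhd_singleton, G.adj_comm t'] at ht ht'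
    have := hP5.exists_chord ht₁ h₁₂ h₂₃ ht'₃.symm
    have := htri.not_adj_of_adj_of_adj ht₁ h₁₂
    have := htri.not_adj_of_adj_of_adj h₁₂ h₂₃
    have := htri.not_adj_of_adj_of_adj h₂₃ ht'₃.symm
    tauto

theorem P5Free.exists_closedNbhd_subset_of_adj_end (hP5 : P5Free G) (htri : G.CliqueFree 3)
    {w z p₁ p₂ p₃ : V} (h₁₂ : G.Adj p₁ p₂) (h₂₃ : G.Adj p₂ p₃) (hwz : G.Adj w z)
    (hz₁ : G.Adj z p₁) (hw : w ∉ G.closedNbhd {p₁, p₂, p₃}) :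
    ∃ q, G.Adj z q ∧ G.closedNbhd {p₁, p₂, p₃} ⊆ G.closedNbhd {w, z, q} := by
  have hz₃ : G.Adj z p₃ := by
    have hw' := hw
    simp only [mem_closedNbhd_insert, mem_closedNbhd_singleton] at hw'
    have := hP5.exists_chord hwz hz₁ h₁₂ h₂₃
    have := htri.not_adj_of_adj_of_adj hz₁ h₁₂
    have := htri.not_adj_of_adj_of_adj h₁₂ h₂₃
    tauto
  rcases hP5.adj_ends_dichotomy htri h₁₂ h₂₃ hwz hz₁ hw with h₁ | h₃
  · exact ⟨p₃, hz₃, hP5.closedNbhd_subset_of_adj_ends htri h₂₃ hwz hz₁ hz₃ hw h₁⟩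
  · have hD : ({p₁, p₂, p₃} : Set V) = {p₃, p₂, p₁} := by ext; simp; tauto
    rw [hD] at hw ⊢
    exact ⟨p₁, hz₁, hP5.closedNbhd_subset_of_adj_ends htri h₁₂.symm hwz hz₃ hz₁ hw h₃⟩

theorem P5Free.exists_isShortPathSet_closedNbhd_ssubset (hP5 : P5Free G)
    (htri : G.CliqueFree 3) {D : Set V} (hD : G.IsShortPathSet D) {w z : V} (hwz : G.Adj w z)
    (hw : w ∉ G.closedNbhd D) (hz : z ∈ G.closedNbhd D) :
    ∃ D', G.IsShortPathSet D' ∧ G.closedNbhd D ⊂ G.closedNbhd D' := by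
  obtain ⟨p₁, p₂, p₃, h₁₂, h₂₃, rfl⟩ := hD
  suffices ∃ q, G.Adj z q ∧ G.closedNbhd {p₁, p₂, p₃} ⊆ G.closedNbhd {w, z, q} by
    obtain ⟨q, hzq, hsub⟩ := this
    refine ⟨{w, z, q}, ⟨w, z, q, hwz, hzq, rfl⟩, (Set.ssubset_iff_of_subset hsub).2 ?_⟩
    exact ⟨w, Or.inl (Set.mem_insert _ _), hw⟩
  obtain ⟨q, hq, hzq⟩ : ∃ q ∈ ({p₁, p₂, p₃} : Set V), G.Adj z q :=
    hz.resolve_left fun hzD ↦ hw (Or.inr ⟨z, hzD, hwz⟩)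
  rcases hq with rfl | rfl | rfl
  · exact hP5.exists_closedNbhd_subset_of_adj_end htri h₁₂ h₂₃ hwz hzq hw
  · exact ⟨q, hzq, hP5.closedNbhd_subset_of_adj_center htri h₁₂ h₂₃ hwz hzq hw⟩
  · have hD : ({p₁, p₂, q} : Set V) = {q, p₂, p₁} := by ext; simp; tauto
    rw [hD] at hw ⊢
    exact hP5.exists_closedNbhd_subset_of_adj_end htri h₂₃.symm h₁₂.symm hwz hzq hw

end SimpleGraph

theorem dominating_short_path_in_P5_free_triangle_free_general
    {V : Type*} [Fintype V] (G : SimpleGraph V)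
    (hconn : G.Connected) (hP5 : P5Free G) (htri : G.CliqueFree 3)
    (hcard : 2 ≤ Fintype.card V) :
    ∃ D : Finset V,
      2 ≤ D.card ∧ D.card ≤ 3 ∧
      (∀ v : V, v ∈ D ∨ ∃ d ∈ D, G.Adj v d) ∧
      Nonempty (G.induce (↑D : Set V) ≃g SimpleGraph.pathGraph D.card) := by
  have : Nontrivial V := Fintype.one_lt_card_iff_nontrivial.1 hcard
  obtain ⟨u, -, -⟩ := exists_pair_ne V
  obtain ⟨u', huu'⟩ := hconn.preconnected.exists_adj_of_nontrivial u
  obtain ⟨D, hD, hmax⟩ := Set.Finite.exists_maximalFor G.closedNbhd {D | G.IsShortPathSet D}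
    (Set.toFinite _) ⟨_, u, u', u, huu', huu'.symm, rfl⟩
  obtain ⟨a, b, c, hab, hbc, rfl⟩ := id hD
  have hdom : G.closedNbhd {a, b, c} = Set.univ := by
    by_contra hne
    obtain ⟨w, z, hwz, hw, hz⟩ := hconn.exists_adj_notMem_mem (Or.inl (Set.mem_insert a _)) hne
    obtain ⟨D', hD', hlt⟩ := hP5.exists_isShortPathSet_closedNbhd_ssubset htri hD hwz hw hz
    exact hlt.not_subset (hmax hD' hlt.subset)
  obtain ⟨n, hn₂, hn₃, f, hf⟩ := htri.exists_pathGraph_embedding_range_eq hab hbc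
  set D := Finset.univ.map f.toEmbedding
  have hcoe : (D : Set V) = {a, b, c} := by simp [D, ← hf]
  have hcardD : D.card = n := by simp [D]
  refine ⟨D, hcardD ▸ hn₂, hcardD ▸ hn₃, fun v ↦ ?_, ?_⟩
  · change v ∈ G.closedNbhd D
    rw [hcoe, hdom]
    trivial
  · rw [hcoe, hcardD, ← hf]
    exact ⟨f.isoInduceRange.symm⟩

theorem dominating_short_path_in_P5_free_triangle_free
    {V : Type*} [Fintype V] [DecidableEq V] (G : SimpleGraph V)
    (hconn : G.Connected) (hP5 : P5Free G) (htri : G.CliqueFree 3)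
    (hcard : 2 ≤ Fintype.card V) :
    ∃ D : Finset V,
      2 ≤ D.card ∧ D.card ≤ 3 ∧
      (∀ v : V, v ∈ D ∨ ∃ d ∈ D, G.Adj v d) ∧
      Nonempty (G.induce (↑D : Set V) ≃g SimpleGraph.pathGraph D.card) :=
  dominating_short_path_in_P5_free_triangle_free_general G hconn hP5 htri hcard
end

section
/- Let G be a P5-free graph, let C ⊆ V(G), and let C = C_L ⊎ C_R be a partition of C such that C_L and C_R are both independent sets in G. Let D ⊆ C, set D_L = D ∩ C_L and D_R = D ∩ C_R, and assume: D_L ≠ ∅, D_R ≠ ∅, every vertex of D_L is adjacent in G to every vertex of D_R, and C ⊆ N[D] (D dominates C). Let X = N(C) \ N(D) and Y = V(G) \ N[C]. Then there is no edge of G with one endpoint in X and the other in Y, i.e., E(X,Y) = ∅. -/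
open SimpleGraph

/-- `N(A)`: the set of vertices outside `A` with a neighbor in `A`. -/
def nbhdSet {V : Type*} (G : SimpleGraph V) (A : Set V) : Set V :=
  {v | v ∉ A ∧ ∃ a ∈ A, G.Adj v a}

/-- `N[A] = N(A) ∪ A`. -/
def closedNbhdSet {V : Type*} (G : SimpleGraph V) (A : Set V) : Set V :=
  nbhdSet G A ∪ A

/-- A set of vertices is independent in `G`. -/
def SetIndep {V : Type*} (G : SimpleGraph V) (A : Set V) : Prop :=
  ∀ x ∈ A, ∀ y ∈ A, ¬ G.Adj x y

/-!
Suppose `x ∈ N(C) \ N(D)` had a neighbour `y ∉ N[C]`, and let `c ∈ C` be a neighbour of `x`.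
Then `c ∉ D`, so `c` has a neighbour `d ∈ D`; as `C_L`, `C_R` are independent, `c` and `d` lie on
opposite sides, and any `d'` in `D` on the side of `c` is adjacent to `d` but not to `c`.
Now `y x c d d'` is an induced `P₅`.
-/

lemma nonempty_pathGraph_five_embedding {V : Type*} {G : SimpleGraph V} {a b c d e : V}
    (hab : G.Adj a b) (hbc : G.Adj b c) (hcd : G.Adj c d) (hde : G.Adj d e)
    (hac : ¬ G.Adj a c) (had : ¬ G.Adj a d) (hae : ¬ G.Adj a e)
    (hbd : ¬ G.Adj b d) (hbe : ¬ G.Adj b e) (hce : ¬ G.Adj c e)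
    (nac : a ≠ c) (nad : a ≠ d) (nae : a ≠ e) (nbd : b ≠ d) (nbe : b ≠ e) (nce : c ≠ e) :
    Nonempty (pathGraph 5 ↪g G) := by
  refine ⟨⟨⟨![a, b, c, d, e], fun i j h => ?_⟩, fun {i j} => ?_⟩⟩
  · fin_cases i <;> fin_cases j <;>
      simp_all [hab.ne, hbc.ne, hcd.ne, hde.ne, hab.ne', hbc.ne', hcd.ne', hde.ne', eq_comm]
  · change G.Adj (![a, b, c, d, e] i) (![a, b, c, d, e] j) ↔ _
    fin_cases i <;> fin_cases j <;> simp_all [pathGraph_adj, G.adj_comm]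

section Neighbourhoods

variable {V : Type*} {G : SimpleGraph V} {A : Set V} {v a : V}

lemma notMem_of_notMem_closedNbhdSet (hv : v ∉ closedNbhdSet G A) : v ∉ A :=
  fun h => hv (Or.inr h)

lemma not_adj_of_notMem_closedNbhdSet (hv : v ∉ closedNbhdSet G A) (ha : a ∈ A) :
    ¬ G.Adj v a :=
  fun h => hv (Or.inl ⟨notMem_of_notMem_closedNbhdSet hv, a, ha, h⟩)

lemma not_adj_of_notMem_nbhdSet (hv : v ∉ nbhdSet G A) (hvA : v ∉ A) (ha : a ∈ A) :
    ¬ G.Adj v a :=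
  fun h => hv ⟨hvA, a, ha, h⟩

end Neighbourhoods

lemma P5Free.not_adj_outside_closedNbhdSet {V : Type*} {G : SimpleGraph V}
    (hP5 : P5Free G) {C D : Set V} (hDC : D ⊆ C) {x y c d d' : V}
    (hxC : x ∉ C) (hxD : x ∉ nbhdSet G D) (hy : y ∉ closedNbhdSet G C)
    (hcC : c ∈ C) (hcD : c ∉ D) (hdD : d ∈ D) (hd'D : d' ∈ D)
    (hxc : G.Adj x c) (hcd : G.Adj c d) (hdd' : G.Adj d d') (hcd' : ¬ G.Adj c d') :
    ¬ G.Adj x y := by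
  intro hxy
  have hyC := notMem_of_notMem_closedNbhdSet hy
  have hxD' : x ∉ D := fun h => hxC (hDC h)
  exact hP5.false <| Classical.choice <| nonempty_pathGraph_five_embedding hxy.symm hxc hcd hdd'
    (not_adj_of_notMem_closedNbhdSet hy hcC) (not_adj_of_notMem_closedNbhdSet hy (hDC hdD))
    (not_adj_of_notMem_closedNbhdSet hy (hDC hd'D))
    (not_adj_of_notMem_nbhdSet hxD hxD' hdD) (not_adj_of_notMem_nbhdSet hxD hxD' hd'D) hcd'
    (ne_of_mem_of_not_mem hcC hyC).symm (ne_of_mem_of_not_mem (hDC hdD) hyC).symm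
    (ne_of_mem_of_not_mem (hDC hd'D) hyC).symm (ne_of_mem_of_not_mem hdD hxD').symm
    (ne_of_mem_of_not_mem hd'D hxD').symm (ne_of_mem_of_not_mem hd'D hcD).symm

lemma exists_adj_not_adj_of_mem_left {V : Type*} {G : SimpleGraph V} {L R D : Set V}
    (hL : SetIndep G L) (hDL : (D ∩ L).Nonempty) (hDadj : ∀ x ∈ D ∩ L, ∀ y ∈ D ∩ R, G.Adj x y)
    {c d : V} (hcL : c ∈ L) (hdD : d ∈ D) (hdLR : d ∈ L ∪ R) (hcd : G.Adj c d) :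
    ∃ d' ∈ D, G.Adj d d' ∧ ¬ G.Adj c d' := by
  have hdR : d ∈ R := hdLR.resolve_left fun hdL => hL c hcL d hdL hcd
  obtain ⟨d', hd'D, hd'L⟩ := hDL
  exact ⟨d', hd'D, (hDadj d' ⟨hd'D, hd'L⟩ d ⟨hdD, hdR⟩).symm, hL c hcL d' hd'L⟩

lemma exists_adj_not_adj_of_mem_union {V : Type*} {G : SimpleGraph V} {L R D : Set V}
    (hL : SetIndep G L) (hR : SetIndep G R) (hDL : (D ∩ L).Nonempty) (hDR : (D ∩ R).Nonempty)
    (hDadj : ∀ x ∈ D ∩ L, ∀ y ∈ D ∩ R, G.Adj x y) (hD : D ⊆ L ∪ R)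
    {c d : V} (hc : c ∈ L ∪ R) (hdD : d ∈ D) (hcd : G.Adj c d) :
    ∃ d' ∈ D, G.Adj d d' ∧ ¬ G.Adj c d' := by
  rcases hc with hcL | hcR
  · exact exists_adj_not_adj_of_mem_left hL hDL hDadj hcL hdD (hD hdD) hcd
  · exact exists_adj_not_adj_of_mem_left hR hDR (fun x hx y hy => (hDadj y hy x hx).symm) hcR
      hdD (Set.union_comm L R ▸ hD hdD) hcd

theorem no_edges_between_X_and_Y_general
    {V : Type*} (G : SimpleGraph V) (hP5 : P5Free G)
    (C CL CR D : Set V)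
    (hpart : CL ∪ CR = C)
    (hCLind : SetIndep G CL) (hCRind : SetIndep G CR)
    (hDC : D ⊆ C)
    (hDL : (D ∩ CL).Nonempty) (hDR : (D ∩ CR).Nonempty)
    (hDadj : ∀ x ∈ D ∩ CL, ∀ y ∈ D ∩ CR, G.Adj x y)
    (hdom : C ⊆ closedNbhdSet G D) :
    ∀ x ∈ nbhdSet G C \ nbhdSet G D,
      ∀ y ∈ (Set.univ : Set V) \ closedNbhdSet G C, ¬ G.Adj x y := by
  subst hpart
  rintro x ⟨⟨hxC, c, hcC, hxc⟩, hxD⟩ y ⟨-, hy⟩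
  have hcD : c ∉ D := fun hcD => hxD ⟨fun hx => hxC (hDC hx), c, hcD, hxc⟩
  obtain ⟨-, d, hdD, hcd⟩ := (hdom hcC).resolve_right hcD
  obtain ⟨d', hd'D, hdd', hcd'⟩ :=
    exists_adj_not_adj_of_mem_union hCLind hCRind hDL hDR hDadj hDC hcC hdD hcd
  exact hP5.not_adj_outside_closedNbhdSet hDC hxC hxD hy hcC hcD hdD hd'D hxc hcd hdd' hcd'

theorem no_edges_between_X_and_Y
    {V : Type*} [Fintype V] (G : SimpleGraph V) (hP5 : P5Free G)
    (C CL CR D : Set V)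
    (hpart : CL ∪ CR = C) (hLR : Disjoint CL CR)
    (hCLind : SetIndep G CL) (hCRind : SetIndep G CR)
    (hDC : D ⊆ C)
    (hDL : (D ∩ CL).Nonempty) (hDR : (D ∩ CR).Nonempty)
    (hDadj : ∀ x ∈ D ∩ CL, ∀ y ∈ D ∩ CR, G.Adj x y)
    (hdom : C ⊆ closedNbhdSet G D) :
    ∀ x ∈ nbhdSet G C \ nbhdSet G D,
      ∀ y ∈ (Set.univ : Set V) \ closedNbhdSet G C, ¬ G.Adj x y :=
  no_edges_between_X_and_Y_general G hP5 C CL CR D hpart hCLind hCRind hDC hDL hDR hDadj hdom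
end

section
/- Let G be a P5-free graph, let C ⊆ V(G), and let C = C_L ⊎ C_R be a partition of C such that C_L and C_R are both independent sets in G. Let D ⊆ C, set D_L = D ∩ C_L and D_R = D ∩ C_R, and assume: D_L ≠ ∅, D_R ≠ ∅, every vertex of D_L is adjacent in G to every vertex of D_R, and C ⊆ N[D]. Let Y = V(G) \ N[C]. Then every vertex u ∉ Y that has a neighbor in Y satisfies u ∈ N(D) \ C; in other words, N(Y) ⊆ N(D) \ C. -/
open SimpleGraph

lemma mkP5 {V : Type*} (G : SimpleGraph V) (a b c d e : V)
    (hab : G.Adj a b) (hbc : G.Adj b c) (hcd : G.Adj c d) (hde : G.Adj d e)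
    (hac : ¬ G.Adj a c) (had : ¬ G.Adj a d) (hae : ¬ G.Adj a e)
    (hbd : ¬ G.Adj b d) (hbe : ¬ G.Adj b e) (hce : ¬ G.Adj c e)
    (hab' : a ≠ b) (hac' : a ≠ c) (had' : a ≠ d) (hae' : a ≠ e)
    (hbc' : b ≠ c) (hbd' : b ≠ d) (hbe' : b ≠ e)
    (hcd' : c ≠ d) (hce' : c ≠ e) (hde' : d ≠ e) :
    Nonempty (SimpleGraph.pathGraph 5 ↪g G) := by
  refine ⟨⟨⟨![a,b,c,d,e], ?_⟩, ?_⟩⟩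
  · intro i j h
    fin_cases i <;> fin_cases j <;>
      first
      | rfl
      | (exfalso; simp only [Matrix.cons_val_zero, Matrix.cons_val_one, Matrix.head_cons,
          Matrix.cons_val_two, Matrix.tail_cons, Matrix.cons_val_three,
          Matrix.cons_val_four] at h; first
          | exact hab' h | exact hac' h | exact had' h | exact hae' h
          | exact hbc' h | exact hbd' h | exact hbe' h
          | exact hcd' h | exact hce' h | exact hde' h
          | exact hab' h.symm | exact hac' h.symm | exact had' h.symm | exact hae' h.symm
          | exact hbc' h.symm | exact hbd' h.symm | exact hbe' h.symm
          | exact hcd' h.symm | exact hce' h.symm | exact hde' h.symm)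
  · intro i j
    fin_cases i <;> fin_cases j <;>
      simp only [Function.Embedding.coeFn_mk, Matrix.cons_val_zero, Matrix.cons_val_one,
        Matrix.head_cons, Matrix.cons_val_two, Matrix.tail_cons, Matrix.cons_val_three,
        Matrix.cons_val_four, pathGraph_adj, Fin.isValue, Fin.val_zero, Fin.val_one] <;>
      norm_num <;>
      first
      | exact hab | exact hbc | exact hcd | exact hde
      | exact hab.symm | exact hbc.symm | exact hcd.symm | exact hde.symm
      | exact hac | exact had | exact hae | exact hbd | exact hbe | exact hce
      | exact fun h => hac h.symm | exact fun h => had h.symm | exact fun h => hae h.symm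
      | exact fun h => hbd h.symm | exact fun h => hbe h.symm | exact fun h => hce h.symm
      | exact G.irrefl

theorem neighbors_of_Y_lie_in_ND_minus_C
    {V : Type*} [Fintype V] (G : SimpleGraph V) (hP5 : P5Free G)
    (C CL CR D : Set V)
    (hpart : CL ∪ CR = C) (hLR : Disjoint CL CR)
    (hCLind : SetIndep G CL) (hCRind : SetIndep G CR)
    (hDC : D ⊆ C)
    (hDL : (D ∩ CL).Nonempty) (hDR : (D ∩ CR).Nonempty)
    (hDadj : ∀ x ∈ D ∩ CL, ∀ y ∈ D ∩ CR, G.Adj x y)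
    (hdom : C ⊆ closedNbhdSet G D) :
    nbhdSet G ((Set.univ : Set V) \ closedNbhdSet G C) ⊆ nbhdSet G D \ C := by
  rintro u ⟨huY, y, hyY, huy⟩
  have hyNC : y ∉ closedNbhdSet G C := hyY.2
  have hyC : y ∉ C := fun h => hyNC (Or.inr h)
  have hyadj : ∀ c ∈ C, ¬ G.Adj y c := fun c hc hadj =>
    hyNC (Or.inl ⟨hyC, c, hc, hadj⟩)
  have huC : u ∉ C := fun h => hyadj u h huy.symm
  have huNC : u ∈ closedNbhdSet G C := by
    by_contra h
    exact huY ⟨Set.mem_univ u, h⟩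
  obtain ⟨c, hcC, huc⟩ : ∃ c ∈ C, G.Adj u c := by
    rcases huNC with ⟨_, c, hc, hadj⟩ | h
    · exact ⟨c, hc, hadj⟩
    · exact absurd h huC
  have huD : u ∉ D := fun h => huC (hDC h)
  refine ⟨⟨huD, ?_⟩, huC⟩
  by_contra hnoD
  push_neg at hnoD
  have hunD : ∀ d ∈ D, ¬ G.Adj u d := fun d hd hadj => hnoD d hd hadj
  have hcD : c ∉ D := fun h => hunD c h huc
  obtain ⟨d, hdD, hcd⟩ : ∃ d ∈ D, G.Adj c d := by
    rcases hdom hcC with ⟨_, d, hd, hadj⟩ | h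
    · exact ⟨d, hd, hadj⟩
    · exact absurd h hcD
  have hdC : d ∈ C := hDC hdD
  have key : ∀ (A B : Set V), A ∪ B = C → SetIndep G A → SetIndep G B →
      Disjoint A B → (D ∩ A).Nonempty →
      (∀ x ∈ D ∩ A, ∀ z ∈ D ∩ B, G.Adj x z) → c ∈ A → False := by
    intro A B hAB hAind hBind hABdisj ⟨dA, hdAD, hdAA⟩ hadjAB hcA
    have hdB : d ∈ B := by
      rcases (hAB ▸ hdC : d ∈ A ∪ B) with h | h
      · exact absurd hcd (hAind c hcA d h)
      · exact h
    have hddA : G.Adj d dA := (hadjAB dA ⟨hdAD, hdAA⟩ d ⟨hdD, hdB⟩).symm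
    have hcdA : c ≠ dA := fun h => hunD dA hdAD (h ▸ huc)
    exact hP5.false (Classical.choice (mkP5 G y u c d dA
      huy.symm huc hcd hddA
      (hyadj c hcC) (hyadj d hdC) (hyadj dA (hDC hdAD))
      (hunD d hdD) (hunD dA hdAD)
      (hAind c hcA dA hdAA)
      huy.ne' (fun h => hyC (h ▸ hcC)) (fun h => hyC (h ▸ hdC))
      (fun h => hyC (h ▸ hDC hdAD))
      (fun h => huC (h ▸ hcC)) (fun h => huC (h ▸ hdC))
      (fun h => huC (h ▸ hDC hdAD))
      hcd.ne hcdA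
      (fun h => hABdisj.ne_of_mem hdAA hdB h.symm)))
  rcases (hpart ▸ hcC : c ∈ CL ∪ CR) with h | h
  · exact key CL CR hpart hCLind hCRind hLR hDL hDadj h
  · exact key CR CL (Set.union_comm CR CL ▸ hpart) hCRind hCLind hLR.symm hDR
      (fun x hx z hz => (hDadj z hz x hx).symm) h
end

section
/- Let G be a P5-free graph, let C ⊆ V(G), and let C = C_L ⊎ C_R be a partition of C such that C_L and C_R are both independent sets in G. Let D ⊆ C, set D_L = D ∩ C_L and D_R = D ∩ C_R, and assume: D_L ≠ ∅, D_R ≠ ∅, every vertex of D_L is adjacent in G to every vertex of D_R, C ⊆ N[D], and moreover N(D_L) ∩ N(D_R) = ∅. Let Y = V(G) \ N[C]. Then the vertex set of every connected component of the induced subgraph G[Y] is a module in G. -/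
/-!
Suppose some component `M` of `G[Y]` is not a module, split by a vertex `u`. Then `u ∉ Y`, and
along a path inside `M` from a neighbour of `u` to a non-neighbour there is an edge `y x` with
`u ~ x`, `u ≁ y`. As `x ∈ Y`, `u ∉ C`, so `u` lies in `N(C)`. Every such vertex sees a cherry
`u ~ a ~ b`, `u ≁ b` with `a, b ∈ C`: if `u` sees a vertex `d ∈ D_L` it misses all of `D_R`
(since `N(D_L) ∩ N(D_R) = ∅`) while `d` is complete to `D_R`; otherwise take for `a` a neighbour
of `u` in `C` and for `b` its neighbour in `D`. Since `Y` is anticomplete to `C`,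
`y - x - u - a - b` is an induced `P₅`.
-/

open SimpleGraph

/-- `M` is a module in `G`: every vertex outside `M` is adjacent to all of `M`
or to none of `M`. -/
def IsModule {V : Type*} (G : SimpleGraph V) (M : Set V) : Prop :=
  ∀ u ∉ M, (∀ m ∈ M, G.Adj u m) ∨ (∀ m ∈ M, ¬ G.Adj u m)

section

variable {V : Type*} {G : SimpleGraph V}

lemma P5Free.false_of_induced_path (hG : P5Free G) {v₀ v₁ v₂ v₃ v₄ : V}
    (h01 : G.Adj v₀ v₁) (h12 : G.Adj v₁ v₂) (h23 : G.Adj v₂ v₃) (h34 : G.Adj v₃ v₄)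
    (n02 : ¬G.Adj v₀ v₂) (n03 : ¬G.Adj v₀ v₃) (n04 : ¬G.Adj v₀ v₄)
    (n13 : ¬G.Adj v₁ v₃) (n14 : ¬G.Adj v₁ v₄) (n24 : ¬G.Adj v₂ v₄)
    (ne02 : v₀ ≠ v₂) (ne03 : v₀ ≠ v₃) (ne04 : v₀ ≠ v₄)
    (ne13 : v₁ ≠ v₃) (ne14 : v₁ ≠ v₄) (ne24 : v₂ ≠ v₄) : False := by
  have := h01.ne; have := h12.ne; have := h23.ne; have := h34.ne
  refine hG.false ⟨⟨![v₀, v₁, v₂, v₃, v₄], fun i j hij => ?_⟩, fun {i j} => ?_⟩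
  · fin_cases i <;> fin_cases j <;> simp_all
  · change G.Adj (![v₀, v₁, v₂, v₃, v₄] i) (![v₀, v₁, v₂, v₃, v₄] j) ↔ _
    fin_cases i <;> fin_cases j <;>
      simp only [pathGraph_adj] <;>
      simp_all [G.adj_comm]

lemma notMem_of_notMem_closedNbhdSet_s5 {C : Set V} {y : V} (hy : y ∉ closedNbhdSet G C) :
    y ∉ C :=
  fun h => hy (Or.inr h)

lemma not_adj_of_notMem_closedNbhdSet_s5 {C : Set V} {y c : V} (hy : y ∉ closedNbhdSet G C)
    (hc : c ∈ C) : ¬G.Adj y c :=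
  fun h => hy (Or.inl ⟨notMem_of_notMem_closedNbhdSet_s5 hy, c, hc, h⟩)

lemma exists_adj_of_mem_closedNbhdSet {C : Set V} {u : V} (hu : u ∈ closedNbhdSet G C)
    (huC : u ∉ C) : ∃ c ∈ C, G.Adj u c := by
  rcases hu with hu | hu
  · exact hu.2
  · exact absurd hu huC

lemma not_adj_of_adj_of_nbhdSet_inter_eq_empty {A B : Set V}
    (hsep : nbhdSet G A ∩ nbhdSet G B = ∅) {u a b : V} (huA : u ∉ A) (huB : u ∉ B)
    (ha : a ∈ A) (hua : G.Adj u a) (hb : b ∈ B) : ¬G.Adj u b := fun hub =>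
  (Set.eq_empty_iff_forall_notMem.mp hsep) u ⟨⟨huA, a, ha, hua⟩, ⟨huB, b, hb, hub⟩⟩

lemma P5Free.false_of_cherry_of_split_edge (hG : P5Free G) {C : Set V} {u x y a b : V}
    (hx : x ∉ closedNbhdSet G C) (hy : y ∉ closedNbhdSet G C) (hu : u ∈ closedNbhdSet G C)
    (hyx : G.Adj y x) (hux : G.Adj u x) (huy : ¬G.Adj u y) (ha : a ∈ C) (hb : b ∈ C)
    (hua : G.Adj u a) (hab : G.Adj a b) (hub : ¬G.Adj u b) : False := by
  have huC : u ∉ C := fun h => not_adj_of_notMem_closedNbhdSet_s5 hx h hux.symm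
  have hxC := notMem_of_notMem_closedNbhdSet_s5 hx
  have hyC := notMem_of_notMem_closedNbhdSet_s5 hy
  exact hG.false_of_induced_path hyx hux.symm hua hab (fun h => huy h.symm)
    (not_adj_of_notMem_closedNbhdSet_s5 hy ha) (not_adj_of_notMem_closedNbhdSet_s5 hy hb)
    (not_adj_of_notMem_closedNbhdSet_s5 hx ha) (not_adj_of_notMem_closedNbhdSet_s5 hx hb) hub
    (fun h => hy (h ▸ hu)) (fun h => hyC (h ▸ ha)) (fun h => hyC (h ▸ hb))
    (fun h => hxC (h ▸ ha)) (fun h => hxC (h ▸ hb)) (fun h => huC (h ▸ hb))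

section Cherry

variable {C A B : Set V} (hAB : A ∪ B ⊆ C) (hA : A.Nonempty) (hB : B.Nonempty)
  (hcomplete : ∀ a ∈ A, ∀ b ∈ B, G.Adj a b) (hsep : nbhdSet G A ∩ nbhdSet G B = ∅)
include hAB hA hB hcomplete hsep

lemma exists_cherry_of_adj_mem_union {u d : V} (hu : u ∉ C) (hd : d ∈ A ∪ B)
    (hud : G.Adj u d) : ∃ e ∈ C, G.Adj d e ∧ ¬G.Adj u e := by
  have huA : u ∉ A := fun h => hu (hAB (Or.inl h))
  have huB : u ∉ B := fun h => hu (hAB (Or.inr h))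
  rcases hd with hdA | hdB
  · obtain ⟨e, he⟩ := hB
    exact ⟨e, hAB (Or.inr he), hcomplete d hdA e he,
      not_adj_of_adj_of_nbhdSet_inter_eq_empty hsep huA huB hdA hud he⟩
  · obtain ⟨e, he⟩ := hA
    exact ⟨e, hAB (Or.inl he), (hcomplete e he d hdB).symm,
      not_adj_of_adj_of_nbhdSet_inter_eq_empty (Set.inter_comm _ _ ▸ hsep) huB huA hdB hud he⟩

lemma exists_cherry_of_adj (hdom : C ⊆ closedNbhdSet G (A ∪ B)) {u c : V} (hu : u ∉ C)
    (hc : c ∈ C) (huc : G.Adj u c) :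
    ∃ a ∈ C, ∃ b ∈ C, G.Adj u a ∧ G.Adj a b ∧ ¬G.Adj u b := by
  rcases hdom hc with ⟨-, d, hd, hcd⟩ | hcD
  · by_cases hud : G.Adj u d
    · obtain ⟨e, he, hde, hue⟩ := exists_cherry_of_adj_mem_union hAB hA hB hcomplete hsep hu hd hud
      exact ⟨d, hAB hd, e, he, hud, hde, hue⟩
    · exact ⟨c, hc, d, hAB hd, huc, hcd, hud⟩
  · obtain ⟨e, he, hce, hue⟩ := exists_cherry_of_adj_mem_union hAB hA hB hcomplete hsep hu hcD huc
    exact ⟨c, hc, e, he, huc, hce, hue⟩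

end Cherry

lemma notMem_of_adj_mem_supp {Y : Set V} {c : (G.induce Y).ConnectedComponent} {u : V}
    (hu : u ∉ Subtype.val '' c.supp) {v : Y} (hv : v ∈ c.supp) (huv : G.Adj u v) : u ∉ Y :=
  fun huY => hu ⟨⟨u, huY⟩, c.mem_supp_of_adj_mem_supp hv (G := G.induce Y) huv.symm, rfl⟩

lemma exists_split_edge_of_not_isModule {Y : Set V} (c : (G.induce Y).ConnectedComponent)
    (hc : ¬IsModule G (Subtype.val '' c.supp)) :
    ∃ u ∉ Y, ∃ x ∈ Y, ∃ y ∈ Y, G.Adj y x ∧ G.Adj u x ∧ ¬G.Adj u y := by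
  simp only [IsModule, not_forall, not_or, not_not, exists_prop] at hc
  obtain ⟨u, hu, ⟨_, ⟨q, hq, rfl⟩, huq⟩, ⟨_, ⟨p, hp, rfl⟩, hup⟩⟩ := hc
  obtain ⟨w⟩ := c.reachable_of_mem_supp hp hq
  obtain ⟨d, -, hd₁, hd₂⟩ := w.exists_boundary_dart {z | G.Adj u z} hup huq
  exact ⟨u, notMem_of_adj_mem_supp hu hp hup, d.fst, d.fst.2, d.snd, d.snd.2, d.adj.symm,
    hd₁, hd₂⟩

end

theorem components_of_Y_are_modules_general
    {V : Type*} (G : SimpleGraph V) (hP5 : P5Free G)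
    (C CL CR D : Set V)
    (hpart : CL ∪ CR = C)
    (hDC : D ⊆ C)
    (hDL : (D ∩ CL).Nonempty) (hDR : (D ∩ CR).Nonempty)
    (hDadj : ∀ x ∈ D ∩ CL, ∀ y ∈ D ∩ CR, G.Adj x y)
    (hdom : C ⊆ closedNbhdSet G D)
    (hsep : nbhdSet G (D ∩ CL) ∩ nbhdSet G (D ∩ CR) = ∅) :
    ∀ c : (G.induce ((Set.univ : Set V) \ closedNbhdSet G C)).ConnectedComponent,
      IsModule G (Subtype.val '' c.supp) := by
  have hD : D ∩ CL ∪ D ∩ CR = D := by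
    rw [← Set.inter_union_distrib_left, hpart, Set.inter_eq_left.mpr hDC]
  intro c
  by_contra hc
  obtain ⟨u, hu, x, ⟨-, hx⟩, y, ⟨-, hy⟩, hyx, hux, huy⟩ := exists_split_edge_of_not_isModule c hc
  have huC : u ∉ C := fun h => not_adj_of_notMem_closedNbhdSet_s5 hx h hux.symm
  obtain ⟨c₀, hc₀, huc₀⟩ := exists_adj_of_mem_closedNbhdSet (by simpa using hu) huC
  obtain ⟨a, ha, b, hb, hua, hab, hub⟩ :=
    exists_cherry_of_adj (by rwa [hD]) hDL hDR hDadj hsep (by rwa [hD]) huC hc₀ huc₀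
  exact hP5.false_of_cherry_of_split_edge hx hy (by simpa using hu) hyx hux huy ha hb hua hab hub

theorem components_of_Y_are_modules
    {V : Type*} [Fintype V] (G : SimpleGraph V) (hP5 : P5Free G)
    (C CL CR D : Set V)
    (hpart : CL ∪ CR = C) (hLR : Disjoint CL CR)
    (hCLind : SetIndep G CL) (hCRind : SetIndep G CR)
    (hDC : D ⊆ C)
    (hDL : (D ∩ CL).Nonempty) (hDR : (D ∩ CR).Nonempty)
    (hDadj : ∀ x ∈ D ∩ CL, ∀ y ∈ D ∩ CR, G.Adj x y)
    (hdom : C ⊆ closedNbhdSet G D)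
    (hsep : nbhdSet G (D ∩ CL) ∩ nbhdSet G (D ∩ CR) = ∅) :
    ∀ c : (G.induce ((Set.univ : Set V) \ closedNbhdSet G C)).ConnectedComponent,
      IsModule G (Subtype.val '' c.supp) :=
  components_of_Y_are_modules_general G hP5 C CL CR D hpart hDC hDL hDR hDadj hdom hsep
end

section
/- Let G be a graph, let C ⊆ V(G), let D ⊆ C with C ⊆ N[D], and let R = N(C) \ N(D). Assume that every vertex of R has all of its neighbors inside N[C] (i.e., E(R, V(G) \ N[C]) = ∅). Let D' ⊆ R ∪ C be such that R ∪ C ⊆ N[D ∪ D']. Then N[D ∪ D'] = N[C]. -/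
open SimpleGraph

lemma mem_closed_of_adj {V : Type*} (G : SimpleGraph V) (A : Set V) (x a : V)
    (ha : a ∈ A) (hadj : G.Adj x a) : x ∈ closedNbhdSet G A := by
  by_cases hx : x ∈ A
  · exact Or.inr hx
  · exact Or.inl ⟨hx, a, ha, hadj⟩

theorem closed_nbhd_of_extended_dominating_set
    {V : Type*} [Fintype V] (G : SimpleGraph V)
    (C D : Set V) (hDC : D ⊆ C) (hdom : C ⊆ closedNbhdSet G D)
    (hR : ∀ r ∈ nbhdSet G C \ nbhdSet G D,
      ∀ v ∉ closedNbhdSet G C, ¬ G.Adj r v)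
    (D' : Set V) (hD' : D' ⊆ (nbhdSet G C \ nbhdSet G D) ∪ C)
    (hdom' : (nbhdSet G C \ nbhdSet G D) ∪ C ⊆ closedNbhdSet G (D ∪ D')) :
    closedNbhdSet G (D ∪ D') = closedNbhdSet G C := by
  have hsub : (nbhdSet G C \ nbhdSet G D) ∪ C ⊆ closedNbhdSet G C := by
    rintro x (⟨hx, _⟩ | hx)
    · exact Or.inl hx
    · exact Or.inr hx
  apply Set.Subset.antisymm
  · rintro x (⟨hxn, a, ha, hadj⟩ | hx)
    · -- x adjacent to a ∈ D ∪ D'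
      rcases ha with ha | ha
      · exact mem_closed_of_adj G C x a (hDC ha) hadj
      · rcases hD' ha with haR | haC
        · -- a ∈ R: all neighbors of a are in N[C]
          by_contra hxC
          exact hR a haR x hxC hadj.symm
        · exact mem_closed_of_adj G C x a haC hadj
    · rcases hx with hx | hx
      · exact hsub (Or.inr (hDC hx))
      · exact hsub (hD' hx)
  · rintro x (hx | hx)
    · -- x ∈ N(C)
      by_cases hxD : x ∈ nbhdSet G D
      · obtain ⟨hxn, a, ha, hadj⟩ := hxD
        exact mem_closed_of_adj G (D ∪ D') x a (Or.inl ha) hadj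
      · exact hdom' (Or.inl ⟨hx, hxD⟩)
    · exact hdom' (Or.inr hx)
end

section
/- Let G be a P5-free graph and let 𝒞 be a family of subsets of V(G) such that for each C ∈ 𝒞 the induced subgraph G[C] is connected. Define the graph H with vertex set 𝒞, where distinct C₁, C₂ ∈ 𝒞 are adjacent in H if and only if C₁ and C₂ touch each other, i.e., C₁ ∩ C₂ ≠ ∅ or there is an edge of G with one endpoint in C₁ and the other in C₂. Then H is P5-free. -/
open SimpleGraph

/-- Two vertex subsets touch: they intersect, or some edge of `G` joins them. -/
def Touch {V : Type*} (G : SimpleGraph V) (A B : Set V) : Prop :=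
  (A ∩ B).Nonempty ∨ ∃ a ∈ A, ∃ b ∈ B, G.Adj a b

/-- The blob graph on a family `𝒞` of vertex subsets of `G`: distinct sets are
adjacent iff they touch each other. -/
def blobGraph {V : Type*} (G : SimpleGraph V) (𝒞 : Set (Set V)) : SimpleGraph 𝒞 where
  Adj C₁ C₂ := C₁ ≠ C₂ ∧ Touch G (↑C₁) (↑C₂)
  symm := by
    constructor
    rintro ⟨A, hA⟩ ⟨B, hB⟩ ⟨hne, h⟩
    refine ⟨Ne.symm hne, ?_⟩
    rcases h with h | ⟨a, ha, b, hb, hab⟩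
    · exact Or.inl (by rwa [Set.inter_comm])
    · exact Or.inr ⟨b, hb, a, ha, hab.symm⟩
  loopless := by constructor; rintro ⟨A, hA⟩ ⟨hne, -⟩; exact hne rfl

/-! If blobs `C₀, …, C₄` induced a `P₅` in the blob graph, their union `U` would induce a connected
subgraph of `G`. Labelling each vertex of `U` by the indices of the blobs containing it, labels
change by at most one along an edge, so a shortest path of `G[U]` from `C₀` to `C₄` has length at
least four; being shortest, its first five vertices induce a `P₅` in `G`. -/

section

variable {V : Type*} {G : SimpleGraph V}

lemma Touch.mono_left {A A' B : Set V} (h : Touch G A B) (hA : A ⊆ A') : Touch G A' B := by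
  rcases h with ⟨x, hxA, hxB⟩ | ⟨a, ha, b, hb, hab⟩
  · exact Or.inl ⟨x, hA hxA, hxB⟩
  · exact Or.inr ⟨a, hA ha, b, hb, hab⟩

lemma Touch.induce_union_connected {A B : Set V} (hA : (G.induce A).Connected)
    (hB : (G.induce B).Connected) (h : Touch G A B) : (G.induce (A ∪ B)).Connected := by
  rcases h with hAB | ⟨a, ha, b, hb, hab⟩
  · exact SimpleGraph.induce_union_connected hA.preconnected hB.preconnected hAB
  · have hAab : (G.induce (A ∪ {a, b})).Connected :=
      SimpleGraph.induce_union_connected hA.preconnected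
        (induce_pair_connected_of_adj hab).preconnected ⟨a, ha, Or.inl rfl⟩
    have hset : A ∪ {a, b} ∪ B = A ∪ B := by
      ext x
      simp only [Set.mem_union, Set.mem_insert_iff, Set.mem_singleton_iff]
      grind
    rw [← hset]
    exact SimpleGraph.induce_union_connected hAab.preconnected hB.preconnected
      ⟨b, Or.inr (Or.inr rfl), hb⟩

namespace SimpleGraph

lemma induce_accumulate_connected_of_touch (C : ℕ → Set V) {n : ℕ}
    (hC : ∀ k ≤ n, (G.induce (C k)).Connected) (htouch : ∀ k < n, Touch G (C k) (C (k + 1))) :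
    (G.induce (Set.accumulate C n)).Connected := by
  induction n with
  | zero => rw [Set.accumulate_zero_nat]; exact hC 0 le_rfl
  | succ n ih =>
    rw [Set.accumulate_succ]
    exact ((htouch n n.lt_succ_self).mono_left Set.subset_accumulate).induce_union_connected
      (ih (fun k hk => hC k (by omega)) (fun k hk => htouch k (by omega))) (hC _ le_rfl)

namespace Walk

/-- A vertex may carry several labels, so a trivial walk gives no bound. -/
lemma le_add_length_of_adj_label {R : V → ℕ → Prop} (hR : ∀ x, ∃ i, R x i)
    (hadj : ∀ x y i j, G.Adj x y → R x i → R y j → j ≤ i + 1) :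
    ∀ {u v : V} (p : G.Walk u v), ¬ p.Nil → ∀ {i j : ℕ}, R u i → R v j → j ≤ i + p.length
  | _, _, .nil, hp, _, _, _, _ => (hp .nil).elim
  | _, _, .cons h .nil, _, _, _, hu, hv => by simpa using hadj _ _ _ _ h hu hv
  | _, _, .cons h (.cons h' p), _, i, j, hu, hv => by
    obtain ⟨k, hk⟩ := hR _
    have hik := hadj _ _ _ _ h hu hk
    have hkj := le_add_length_of_adj_label hR hadj (.cons h' p) not_nil_cons hk hv
    simp only [length_cons] at hkj ⊢
    omega

variable {u v : V} {p : G.Walk u v}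

lemma sub_le_dist_getVert (hp : p.length = G.dist u v) {i j : ℕ} (hij : i ≤ j)
    (hj : j ≤ p.length) : j - i ≤ G.dist (p.getVert i) (p.getVert j) := by
  obtain ⟨q, hq⟩ :=
    ((p.take i).reverse.append (p.take j)).reachable.exists_walk_length_eq_dist
  have := G.dist_le ((p.take i).append (q.append (p.drop j)))
  simp only [length_append, take_length, drop_length] at this
  omega

lemma adj_getVert_iff (hp : p.length = G.dist u v) {i j : ℕ} (hij : i ≤ j)
    (hj : j ≤ p.length) : G.Adj (p.getVert i) (p.getVert j) ↔ i + 1 = j := by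
  refine ⟨fun h => ?_, fun h => h ▸ p.adj_getVert_succ (by omega)⟩
  have hdist := sub_le_dist_getVert hp hij hj
  rw [dist_eq_one_iff_adj.2 h] at hdist
  rcases Nat.eq_or_lt_of_le hij with rfl | _
  · exact (G.irrefl h).elim
  · omega

def pathGraphEmbedding (p : G.Walk u v) (hp : p.length = G.dist u v) {n : ℕ}
    (hn : n ≤ p.length) : pathGraph (n + 1) ↪g G where
  toFun k := p.getVert k
  inj' i j h := by
    wlog hij : (i : ℕ) ≤ j generalizing i j
    · exact (this j i h.symm (by omega)).symm
    have := sub_le_dist_getVert hp hij (by omega)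
    rw [show p.getVert i = p.getVert j from h, dist_self] at this
    exact Fin.ext (by omega)
  map_rel_iff' {i j} := by
    change G.Adj (p.getVert i) (p.getVert j) ↔ _
    rw [pathGraph_adj]
    rcases le_total (i : ℕ) j with hij | hji
    · rw [adj_getVert_iff hp hij (by omega)]
      omega
    · rw [G.adj_comm, adj_getVert_iff hp hji (by omega)]
      omega

end Walk

end SimpleGraph

namespace blobGraph

variable {𝒞 : Set (Set V)} {n : ℕ} (f : pathGraph n ↪g blobGraph G 𝒞) {i j : Fin n}

lemma touch_of_pathGraph_adj (h : (pathGraph n).Adj i j) : Touch G (f i) (f j) :=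
  (f.map_adj_iff.2 h).2

lemma le_succ_of_touch (h : Touch G (f i) (f j)) : (j : ℕ) ≤ i + 1 := by
  by_cases hij : i = j
  · subst hij; omega
  · have := f.map_adj_iff.1 ⟨fun h' => hij (f.injective h'), h⟩
    rw [pathGraph_adj] at this
    omega

end blobGraph

end

theorem blob_graph_of_P5_free_is_P5_free_general
    {V : Type*} (G : SimpleGraph V) (hP5 : P5Free G)
    (𝒞 : Set (Set V)) (hconn : ∀ C ∈ 𝒞, (G.induce C).Connected) :
    P5Free (blobGraph G 𝒞) := by
  refine ⟨fun f => ?_⟩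
  set C : ℕ → Set V := fun k => f (Fin.ofNat 5 k)
  have hC : ∀ k, (G.induce (C k)).Connected := fun k => hconn _ (f _).2
  have hval : ∀ {k : ℕ}, k ≤ 4 → (Fin.ofNat 5 k : ℕ) = k := fun hk => by
    rw [Fin.val_ofNat, Nat.mod_eq_of_lt (by omega)]
  have hnext : ∀ k < 4, Touch G (C k) (C (k + 1)) := fun k hk =>
    blobGraph.touch_of_pathGraph_adj f <| by
      rw [pathGraph_adj, hval (k := k + 1) (by omega), hval hk.le]; omega
  have hle : ∀ i j, i ≤ 4 → j ≤ 4 → Touch G (C i) (C j) → j ≤ i + 1 := fun i j hi hj h => by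
    simpa only [hval hi, hval hj] using blobGraph.le_succ_of_touch f h
  set U := Set.accumulate C 4
  have hU : ∀ {k x}, k ≤ 4 → x ∈ C k → x ∈ U := fun hk hx => Set.mem_accumulate.2 ⟨_, hk, hx⟩
  obtain ⟨v₀, hv₀⟩ := (hC 0).nonempty
  obtain ⟨v₄, hv₄⟩ := (hC 4).nonempty
  obtain ⟨p, hp⟩ := (induce_accumulate_connected_of_touch C (fun k _ => hC k) hnext
    ⟨v₀, hU (by norm_num) hv₀⟩ ⟨v₄, hU le_rfl hv₄⟩).exists_walk_length_eq_dist
  have hlen : 4 ≤ p.length := by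
    have hnil : ¬ p.Nil := fun h => by
      have hv : v₀ = v₄ := congrArg Subtype.val h.eq
      have := hle 0 4 (by norm_num) le_rfl (.inl ⟨v₀, hv₀, hv ▸ hv₄⟩)
      omega
    simpa using p.le_add_length_of_adj_label (R := fun (x : U) k => k ≤ 4 ∧ (x : V) ∈ C k)
      (fun x => Set.mem_accumulate.1 x.2)
      (fun x y i j hxy hx hy => hle i j hx.1 hy.1 (.inr ⟨x, hx.2, y, hy.2, hxy⟩))
      hnil ⟨by norm_num, hv₀⟩ ⟨le_rfl, hv₄⟩
  exact hP5.false ((p.pathGraphEmbedding hp hlen).trans (Embedding.induce U))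

theorem blob_graph_of_P5_free_is_P5_free
    {V : Type*} [Fintype V] (G : SimpleGraph V) (hP5 : P5Free G)
    (𝒞 : Set (Set V)) (hconn : ∀ C ∈ 𝒞, (G.induce C).Connected) :
    P5Free (blobGraph G 𝒞) :=
  blob_graph_of_P5_free_is_P5_free_general G hP5 𝒞 hconn
end

section
/- Let G be a graph with weight function w : V(G) → ℚ, and let 𝒞̃ be a family of subsets of V(G) such that each C ∈ 𝒞̃ induces a connected bipartite subgraph of G. Assume there exists a set S* ⊆ V(G) such that G[S*] is bipartite, w(S*) is maximum among all subsets of V(G) inducing a bipartite subgraph, and the vertex set of every connected component of G[S*] belongs to 𝒞̃. Let H be the graph with vertex set 𝒞̃ in which distinct C₁, C₂ are adjacent if and only if they touch each other, and define w^blob : 𝒞̃ → ℚ by w^blob(C) = Σ_{u∈C} w(u). Then the maximum of w(S) over all S ⊆ V(G) with G[S] bipartite equals the maximum of Σ_{C∈I} w^blob(C) over all independent sets I of H. -/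
open SimpleGraph Finset

/-! Sets that pairwise do not touch are disjoint and have no edges between them, so the union of
a blob-independent family of bipartite blobs is bipartite, with weight the sum of the blob weights;
hence no independent set of the blob graph beats `w(S*)`. Conversely the components of `G[S*]`
pairwise do not touch, so they form an independent set of the blob graph of weight `w(S*)`. -/

/-- A finite set of vertices is independent in `G`. -/
def FinsetIndep {V : Type*} (G : SimpleGraph V) (A : Finset V) : Prop :=
  ∀ x ∈ A, ∀ y ∈ A, ¬ G.Adj x y

/-- A finite set of vertices induces a bipartite subgraph of `G`:
it can be partitioned into two independent sets. -/
def IndBipartite {V : Type*} [DecidableEq V] (G : SimpleGraph V) (S : Finset V) : Prop :=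
  ∃ A B : Finset V, A ∪ B = S ∧ A ∩ B = ∅ ∧ FinsetIndep G A ∧ FinsetIndep G B

/-- Two vertex subsets touch: they intersect, or some edge of `G` joins them. -/
def FinsetTouch {V : Type*} [DecidableEq V] (G : SimpleGraph V) (A B : Finset V) : Prop :=
  (A ∩ B).Nonempty ∨ ∃ a ∈ A, ∃ b ∈ B, G.Adj a b

/-- The blob graph on a family `𝒞` of finite vertex subsets of `G`:
distinct sets are adjacent iff they touch each other. -/
def finsetBlobGraph {V : Type*} [DecidableEq V] (G : SimpleGraph V) (𝒞 : Finset (Finset V)) :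
    SimpleGraph {C : Finset V // C ∈ 𝒞} where
  Adj C₁ C₂ := C₁ ≠ C₂ ∧ FinsetTouch G (↑C₁) (↑C₂)
  symm := by
    constructor
    rintro ⟨A, hA⟩ ⟨B, hB⟩ ⟨hne, h⟩
    refine ⟨Ne.symm hne, ?_⟩
    rcases h with h | ⟨a, ha, b, hb, hab⟩
    · exact Or.inl (by rwa [Finset.inter_comm])
    · exact Or.inr ⟨b, hb, a, ha, hab.symm⟩
  loopless := by constructor; rintro ⟨A, hA⟩ ⟨hne, -⟩; exact hne rfl


section Touching

variable {V : Type*} [DecidableEq V] {G : SimpleGraph V}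

theorem FinsetTouch.mono {A A' B B' : Finset V} (hA : A ⊆ A') (hB : B ⊆ B')
    (h : FinsetTouch G A B) : FinsetTouch G A' B' := by
  rcases h with ⟨v, hv⟩ | ⟨a, ha, b, hb, hab⟩
  · exact Or.inl ⟨v, Finset.inter_subset_inter hA hB hv⟩
  · exact Or.inr ⟨a, hA ha, b, hB hb, hab⟩

theorem FinsetTouch.of_not_disjoint {A B : Finset V} (h : ¬Disjoint A B) : FinsetTouch G A B :=
  Or.inl (Finset.not_disjoint_iff_nonempty_inter.mp h)

variable {ι : Type*} {s : Finset ι}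

theorem sum_biUnion_of_pairwise_not_finsetTouch {β : Type*} [AddCommMonoid β] {f : ι → Finset V}
    (hs : (s : Set ι).Pairwise fun i j => ¬FinsetTouch G (f i) (f j)) (w : V → β) :
    ∑ v ∈ s.biUnion f, w v = ∑ i ∈ s, ∑ v ∈ f i, w v :=
  Finset.sum_biUnion (hs.mono' fun _ _ h => not_not.mp (mt FinsetTouch.of_not_disjoint h))

theorem FinsetIndep.biUnion {A : ι → Finset V} (hA : ∀ i ∈ s, FinsetIndep G (A i))
    (hs : (s : Set ι).Pairwise fun i j => ¬FinsetTouch G (A i) (A j)) :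
    FinsetIndep G (s.biUnion A) := by
  intro a ha b hb hab
  obtain ⟨i, hi, hai⟩ := Finset.mem_biUnion.mp ha
  obtain ⟨j, hj, hbj⟩ := Finset.mem_biUnion.mp hb
  by_cases hij : i = j
  · subst hij
    exact hA i hi a hai b hbj hab
  · exact hs hi hj hij (Or.inr ⟨a, hai, b, hbj, hab⟩)

theorem IndBipartite.biUnion {f : ι → Finset V} (hf : ∀ i ∈ s, IndBipartite G (f i))
    (hs : (s : Set ι).Pairwise fun i j => ¬FinsetTouch G (f i) (f j)) :
    IndBipartite G (s.biUnion f) := by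
  choose! A B hAB hdisj hA hB using hf
  have hAf : ∀ i ∈ s, A i ⊆ f i := fun i hi => hAB i hi ▸ Finset.subset_union_left
  have hBf : ∀ i ∈ s, B i ⊆ f i := fun i hi => hAB i hi ▸ Finset.subset_union_right
  refine ⟨s.biUnion A, s.biUnion B, ?_, ?_, ?_, ?_⟩
  · rw [← Finset.biUnion_union]
    exact Finset.biUnion_congr rfl hAB
  · refine Finset.disjoint_iff_inter_eq_empty.mp <| (Finset.disjoint_biUnion_left _ _ _).mpr
      fun i hi => (Finset.disjoint_biUnion_right _ _ _).mpr fun j hj => ?_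
    by_cases hij : i = j
    · subst hij
      exact Finset.disjoint_iff_inter_eq_empty.mpr (hdisj i hi)
    · by_contra h
      exact hs hi hj hij ((FinsetTouch.of_not_disjoint h).mono (hAf i hi) (hBf j hj))
  · exact FinsetIndep.biUnion hA fun i hi j hj hij h => hs hi hj hij (h.mono (hAf i hi) (hAf j hj))
  · exact FinsetIndep.biUnion hB fun i hi j hj hij h => hs hi hj hij (h.mono (hBf i hi) (hBf j hj))

theorem finsetBlobGraph_indep_iff {𝒞 : Finset (Finset V)} {I : Finset {C : Finset V // C ∈ 𝒞}} :
    (∀ C₁ ∈ I, ∀ C₂ ∈ I, ¬(finsetBlobGraph G 𝒞).Adj C₁ C₂) ↔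
      (I : Set {C : Finset V // C ∈ 𝒞}).Pairwise fun C₁ C₂ => ¬FinsetTouch G C₁ C₂ :=
  ⟨fun hI _ h₁ _ h₂ hne ht => hI _ h₁ _ h₂ ⟨hne, ht⟩,
    fun hI _ h₁ _ h₂ hadj => hI h₁ h₂ hadj.1 hadj.2⟩

end Touching

section Components

variable {V : Type*} {G : SimpleGraph V} {S : Finset V}

open Classical in
noncomputable def componentFinset (c : (G.induce (S : Set V)).ConnectedComponent) : Finset V :=
  c.supp.toFinset.map (Function.Embedding.subtype _)

theorem mem_componentFinset {c : (G.induce (S : Set V)).ConnectedComponent} {v : V} :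
    v ∈ componentFinset c ↔
      ∃ h : v ∈ S, (G.induce (S : Set V)).connectedComponentMk ⟨v, h⟩ = c := by
  simp [componentFinset]

theorem coe_componentFinset (c : (G.induce (S : Set V)).ConnectedComponent) :
    (componentFinset c : Set V) = Subtype.val '' c.supp := by
  ext v
  simp [mem_componentFinset]

variable [DecidableEq V]

theorem not_finsetTouch_componentFinset {c₁ c₂ : (G.induce (S : Set V)).ConnectedComponent}
    (hne : c₁ ≠ c₂) : ¬FinsetTouch G (componentFinset c₁) (componentFinset c₂) := by
  rintro (⟨v, hv⟩ | ⟨a, ha, b, hb, hab⟩)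
  · obtain ⟨hv₁, hv₂⟩ := Finset.mem_inter.mp hv
    obtain ⟨_, rfl⟩ := mem_componentFinset.mp hv₁
    obtain ⟨_, rfl⟩ := mem_componentFinset.mp hv₂
    exact hne rfl
  · obtain ⟨ha, rfl⟩ := mem_componentFinset.mp ha
    obtain ⟨hb, rfl⟩ := mem_componentFinset.mp hb
    exact hne (ConnectedComponent.sound (Adj.reachable (G := G.induce (S : Set V)) hab))

theorem biUnion_componentFinset [Fintype (G.induce (S : Set V)).ConnectedComponent] :
    Finset.univ.biUnion (componentFinset (G := G) (S := S)) = S := by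
  ext v
  simp only [Finset.mem_biUnion, Finset.mem_univ, true_and, mem_componentFinset]
  exact ⟨fun ⟨_, h, _⟩ => h, fun h => ⟨_, h, rfl⟩⟩

end Components

theorem max_bipartite_weight_eq_max_independent_set_in_blob_graph_general
    {V : Type*} [DecidableEq V] (G : SimpleGraph V) (w : V → ℚ)
    (𝒞 : Finset (Finset V))
    (hbip : ∀ C ∈ 𝒞, IndBipartite G C)
    (S : Finset V) (hS : IndBipartite G S)
    (hSmax : ∀ T : Finset V, IndBipartite G T → ∑ v ∈ T, w v ≤ ∑ v ∈ S, w v)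
    (hScomp : ∀ c : (G.induce (↑S : Set V)).ConnectedComponent,
      ∃ C ∈ 𝒞, (↑C : Set V) = Subtype.val '' c.supp) :
    ∃ W : ℚ,
      IsGreatest {x : ℚ | ∃ T : Finset V, IndBipartite G T ∧ ∑ v ∈ T, w v = x} W ∧
      IsGreatest {x : ℚ | ∃ I : Finset {C : Finset V // C ∈ 𝒞},
        (∀ C₁ ∈ I, ∀ C₂ ∈ I, ¬ (finsetBlobGraph G 𝒞).Adj C₁ C₂) ∧
        ∑ C ∈ I, (∑ v ∈ (↑C : Finset V), w v) = x} W := by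
  classical
  refine ⟨∑ v ∈ S, w v, ⟨⟨S, hS, rfl⟩, fun _ ⟨T, hT, hx⟩ => hx ▸ hSmax T hT⟩, ?_, ?_⟩
  · have hblob : ∀ c : (G.induce (S : Set V)).ConnectedComponent,
        ∃ C : {C : Finset V // C ∈ 𝒞}, (C : Finset V) = componentFinset c := by
      intro c
      obtain ⟨C, hC, hCc⟩ := hScomp c
      exact ⟨⟨C, hC⟩, Finset.coe_injective (hCc.trans (coe_componentFinset c).symm)⟩
    choose blob hblob using hblob
    have hI : ((Finset.univ.image blob : Finset _) : Set {C : Finset V // C ∈ 𝒞}).Pairwise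
        fun C₁ C₂ => ¬FinsetTouch G C₁ C₂ := by
      simp only [Finset.coe_image, Finset.coe_univ, Set.image_univ]
      rintro _ ⟨c₁, rfl⟩ _ ⟨c₂, rfl⟩ hne
      rw [hblob, hblob]
      exact not_finsetTouch_componentFinset fun h => hne (congrArg blob h)
    refine ⟨Finset.univ.image blob, finsetBlobGraph_indep_iff.mpr hI, ?_⟩
    rw [← sum_biUnion_of_pairwise_not_finsetTouch hI, Finset.image_biUnion]
    simp only [hblob, biUnion_componentFinset]
  · rintro _ ⟨I, hI, rfl⟩
    rw [finsetBlobGraph_indep_iff] at hI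
    rw [← sum_biUnion_of_pairwise_not_finsetTouch hI]
    exact hSmax _ (IndBipartite.biUnion (fun C _ => hbip C C.2) hI)

theorem max_bipartite_weight_eq_max_independent_set_in_blob_graph
    {V : Type*} [Fintype V] [DecidableEq V] (G : SimpleGraph V) (w : V → ℚ)
    (𝒞 : Finset (Finset V))
    (hbip : ∀ C ∈ 𝒞, IndBipartite G C)
    (hconn : ∀ C ∈ 𝒞, (G.induce (↑C : Set V)).Connected)
    (S : Finset V) (hS : IndBipartite G S)
    (hSmax : ∀ T : Finset V, IndBipartite G T → ∑ v ∈ T, w v ≤ ∑ v ∈ S, w v)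
    (hScomp : ∀ c : (G.induce (↑S : Set V)).ConnectedComponent,
      ∃ C ∈ 𝒞, (↑C : Set V) = Subtype.val '' c.supp) :
    ∃ W : ℚ,
      IsGreatest {x : ℚ | ∃ T : Finset V, IndBipartite G T ∧ ∑ v ∈ T, w v = x} W ∧
      IsGreatest {x : ℚ | ∃ I : Finset {C : Finset V // C ∈ 𝒞},
        (∀ C₁ ∈ I, ∀ C₂ ∈ I, ¬ (finsetBlobGraph G 𝒞).Adj C₁ C₂) ∧
        ∑ C ∈ I, (∑ v ∈ (↑C : Finset V), w v) = x} W :=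
  max_bipartite_weight_eq_max_independent_set_in_blob_graph_general G w 𝒞 hbip S hS hSmax hScomp
end
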